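/- There is no voting method F whose domain is the set of all profiles with two or three alternatives that satisfies anonymity, neutrality, positive responsiveness, and immunity to spoilers. -/

import Mathlib

/-!
Formalization of notions from "An extension of May's Theorem to three
alternatives: axiomatizing Minimax voting" by Holliday and Pacuit.

The set of voters is the countably infinite set `ℕ`; the set `α` of
alternatives is a type (assumed to have at least three elements where the
paper assumes `|𝒳| ≥ 3`).
-/

namespace MayMinimax

/-- A profile: a finite set of voters drawn from the countably infinite set `ℕ`
of all voters, a finite set of alternatives, and, for each voter, a binary
relation on alternatives given as a Boolean-valued function:
`P.rel i a b = true` means that voter `i` ranks `a` above `b`. -/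
structure Profile (α : Type*) where
  voters : Finset ℕ
  alts : Finset α
  rel : ℕ → α → α → Bool

variable {α : Type*} [DecidableEq α]

/-- Each voter's ballot is a strict weak order (asymmetric and negatively
transitive) on the alternatives. -/
def IsSWO (P : Profile α) : Prop :=
  ∀ i ∈ P.voters,
    (∀ a ∈ P.alts, ∀ b ∈ P.alts, P.rel i a b = true → P.rel i b a = false) ∧
    (∀ a ∈ P.alts, ∀ b ∈ P.alts, ∀ c ∈ P.alts,
      P.rel i a b = false → P.rel i b c = false → P.rel i a c = false)

/-- The margin of `a` over `b` in `P`: the number of voters ranking `a` above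
`b` minus the number of voters ranking `b` above `a`. -/
def Margin (P : Profile α) (a b : α) : ℤ :=
  ((P.voters.filter fun i => P.rel i a b = true).card : ℤ) -
    ((P.voters.filter fun i => P.rel i b a = true).card : ℤ)

/-- The number of voters ranking `a` above `b` in `P`. -/
def Support (P : Profile α) (a b : α) : ℕ :=
  (P.voters.filter fun i => P.rel i a b = true).card

/-- The Minimax score of `a`: the maximum margin of any other alternative over `a`. -/
def MMScore (P : Profile α) (a : α) : ℤ :=
  (((P.alts.erase a).image fun b => Margin P b a).max).unbotD 0

/-- The set of Minimax winners: alternatives with minimal Minimax score. -/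
def Minimax (P : Profile α) : Finset α :=
  P.alts.filter fun a => ∀ b ∈ P.alts, MMScore P a ≤ MMScore P b

/-- Restriction of a profile to a subset `Y` of the alternatives. -/
def Profile.restrict (P : Profile α) (Y : Finset α) : Profile α where
  voters := P.voters
  alts := Y
  rel := fun i a b => P.rel i a b && decide (a ∈ Y) && decide (b ∈ Y)

/-- `P.minus b` is `P` restricted to `X(P) \ {b}`. -/
def Profile.minus (P : Profile α) (b : α) : Profile α :=
  P.restrict (P.alts.erase b)

/-- The combination `P + Q` of two profiles (used with disjoint voter sets and
the same set of alternatives). -/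
def Profile.combine (P Q : Profile α) : Profile α where
  voters := P.voters ∪ Q.voters
  alts := P.alts
  rel := fun i a b => if i ∈ P.voters then P.rel i a b else Q.rel i a b

/-- `2P`: the profile `P` together with a copy of `P` on a disjoint set of voters. -/
def Profile.double (P : Profile α) : Profile α where
  voters := P.voters ∪ P.voters.image fun i => i + (P.voters.sup id + 1)
  alts := P.alts
  rel := fun i a b =>
    if i ∈ P.voters then P.rel i a b else P.rel (i - (P.voters.sup id + 1)) a b

/-- `r` is (the strict part of) a linear order on the finite set `X`. -/
def IsLinearOn (r : α → α → Bool) (X : Finset α) : Prop :=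
  (∀ a ∈ X, r a a = false) ∧
  (∀ a ∈ X, ∀ b ∈ X, ∀ c ∈ X, r a b = true → r b c = true → r a c = true) ∧
  (∀ a ∈ X, ∀ b ∈ X, a ≠ b → (r a b = true ∨ r b a = true)) ∧
  (∀ a ∈ X, ∀ b ∈ X, r a b = true → r b a = false)

/-- `Q` is a block profile for the set `X` of alternatives: it contains, for
each linear order of `X`, exactly one voter submitting that linear order, and
no other voters. -/
def IsBlock (X : Finset α) (Q : Profile α) : Prop :=
  Q.alts = X ∧
  (∀ i ∈ Q.voters, IsLinearOn (Q.rel i) X) ∧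
  (∀ r : α → α → Bool, IsLinearOn r X →
    ∃! i, i ∈ Q.voters ∧ ∀ a ∈ X, ∀ b ∈ X, Q.rel i a b = r a b)

/-- `P'` is obtained from `P` by one voter who ranked `a` uniquely last in `P`
switching to ranking `a` uniquely first in `P'`, with the restriction of that
voter's relation to `X(P) \ {a}` unchanged and all other voters' relations
unchanged. -/
def MoveLastToFirst (P P' : Profile α) (a : α) : Prop :=
  P'.voters = P.voters ∧ P'.alts = P.alts ∧ a ∈ P.alts ∧
  ∃ i ∈ P.voters,
    (∀ b ∈ P.alts, b ≠ a → P.rel i b a = true) ∧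
    (∀ b ∈ P.alts, b ≠ a → P'.rel i a b = true) ∧
    (∀ b ∈ P.alts, b ≠ a → ∀ c ∈ P.alts, c ≠ a → P'.rel i b c = P.rel i b c) ∧
    (∀ j ∈ P.voters, j ≠ i → ∀ x ∈ P.alts, ∀ y ∈ P.alts, P'.rel j x y = P.rel j x y)

/-- `P'` is obtained from `P` by adding one new voter who ranks `a` uniquely
first, all old voters' relations being unchanged. -/
def AddTopVoter (P P' : Profile α) (a : α) : Prop :=
  P'.alts = P.alts ∧
  ∃ j, j ∉ P.voters ∧ P'.voters = insert j P.voters ∧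
    (∀ b ∈ P.alts, b ≠ a → P'.rel j a b = true) ∧
    (∀ i ∈ P.voters, ∀ x ∈ P.alts, ∀ y ∈ P.alts, P'.rel i x y = P.rel i x y)

/-- `P'` is obtained from `P` by one voter improving the position of `a` in
their ballot, while nothing else changes. -/
def ImproveFor (P P' : Profile α) (a : α) : Prop :=
  P'.voters = P.voters ∧ P'.alts = P.alts ∧
  ∃ i ∈ P.voters,
    (∃ b ∈ P.alts, b ≠ a ∧
      ((P.rel i a b = false ∧ P'.rel i a b = true) ∨
        (P.rel i b a = true ∧ P'.rel i b a = false))) ∧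
    (∀ c ∈ P.alts, c ≠ a →
      (P.rel i a c = true → P'.rel i a c = true) ∧
      (P.rel i c a = false → P'.rel i c a = false)) ∧
    (∀ c ∈ P.alts, c ≠ a → ∀ d ∈ P.alts, d ≠ a → P'.rel i c d = P.rel i c d) ∧
    (∀ j ∈ P.voters, j ≠ i → ∀ x ∈ P.alts, ∀ y ∈ P.alts, P'.rel j x y = P.rel j x y)

/-- Anonymity relative to a domain `D` of profiles. -/
def Anonymity (D : Set (Profile α)) (F : Profile α → Finset α) : Prop :=
  ∀ P ∈ D, ∀ P' ∈ D, P.alts = P'.alts →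
    (∃ π : Equiv.Perm ℕ, P.voters.image π = P'.voters ∧
      ∀ i ∈ P.voters, ∀ a ∈ P.alts, ∀ b ∈ P.alts, P.rel i a b = P'.rel (π i) a b) →
    F P = F P'

/-- Neutrality relative to a domain `D` of profiles. -/
def Neutrality (D : Set (Profile α)) (F : Profile α → Finset α) : Prop :=
  ∀ P ∈ D, ∀ P' ∈ D, P.voters = P'.voters →
    ∀ τ : Equiv.Perm α, P.alts.image τ = P'.alts →
      (∀ i ∈ P.voters, ∀ a ∈ P.alts, ∀ b ∈ P.alts, P.rel i a b = P'.rel i (τ a) (τ b)) →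
      (F P).image τ = F P'

/-- Weak positive responsiveness relative to a domain `D` of profiles. -/
def WeakPositiveResponsiveness (D : Set (Profile α)) (F : Profile α → Finset α) : Prop :=
  ∀ P ∈ D, ∀ P' ∈ D, ∀ a ∈ F P, MoveLastToFirst P P' a → F P' = {a}

/-- (Full) positive responsiveness relative to a domain `D` of profiles. -/
def PositiveResponsiveness (D : Set (Profile α)) (F : Profile α → Finset α) : Prop :=
  ∀ P ∈ D, ∀ P' ∈ D, ∀ a ∈ F P, ImproveFor P P' a → F P' = {a}

/-- Positive involvement relative to a domain `D` of profiles. -/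
def PositiveInvolvement (D : Set (Profile α)) (F : Profile α → Finset α) : Prop :=
  ∀ P ∈ D, ∀ P' ∈ D, ∀ a ∈ F P, AddTopVoter P P' a → a ∈ F P'

/-- Near immunity to spoilers relative to a domain `D` of profiles. -/
def NearImmunityToSpoilers (D : Set (Profile α)) (F : Profile α → Finset α) : Prop :=
  ∀ P ∈ D, ∀ a ∈ P.alts, ∀ b ∈ P.alts,
    P.minus b ∈ D → P.restrict {a, b} ∈ D →
    F (P.minus b) = {a} → F (P.restrict {a, b}) = {a} → b ∉ F P → a ∈ F P

/-- Immunity to spoilers relative to a domain `D` of profiles. -/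
def ImmunityToSpoilers (D : Set (Profile α)) (F : Profile α → Finset α) : Prop :=
  ∀ P ∈ D, ∀ a ∈ P.alts, ∀ b ∈ P.alts,
    P.minus b ∈ D → P.restrict {a, b} ∈ D →
    a ∈ F (P.minus b) → F (P.restrict {a, b}) = {a} → b ∉ F P → a ∈ F P

/-- (Inclusion) homogeneity relative to a domain `D` of profiles. -/
def Homogeneity (D : Set (Profile α)) (F : Profile α → Finset α) : Prop :=
  ∀ P ∈ D, P.double ∈ D ∧ F P ⊆ F P.double

/-- Block preservation relative to a domain `D` of profiles. -/
def BlockPreservation (D : Set (Profile α)) (F : Profile α → Finset α) : Prop :=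
  ∀ P ∈ D, ∀ Q ∈ D, Disjoint P.voters Q.voters → IsBlock P.alts Q →
    P.combine Q ∈ D ∧ F P ⊆ F (P.combine Q)

/-- Condorcet consistency relative to a domain `D` of profiles. -/
def CondorcetConsistent (D : Set (Profile α)) (F : Profile α → Finset α) : Prop :=
  ∀ P ∈ D, ∀ c ∈ P.alts, (∀ x ∈ P.alts, x ≠ c → 0 < Margin P c x) → F P = {c}

/-- The domain of all (strict-weak-order) profiles with exactly two alternatives. -/
def Dom2 (α : Type*) : Set (Profile α) :=
  {P | IsSWO P ∧ P.voters.Nonempty ∧ P.alts.card = 2}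

/-- The domain of all profiles with two or three alternatives. -/
def Dom23 (α : Type*) : Set (Profile α) :=
  {P | IsSWO P ∧ P.voters.Nonempty ∧ (P.alts.card = 2 ∨ P.alts.card = 3)}

/-- The domain of all profiles with at least two alternatives. -/
def DomGe2 (α : Type*) : Set (Profile α) :=
  {P | IsSWO P ∧ P.voters.Nonempty ∧ 2 ≤ P.alts.card}

/-- The domain of all profiles. -/
def DomAll (α : Type*) : Set (Profile α) :=
  {P | IsSWO P ∧ P.voters.Nonempty ∧ P.alts.Nonempty}

/-- The support-based Minimax score of `a`: the maximum of `Support P b a`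
over all `b` with a positive margin over `a` (`0` if there is no such `b`). -/
def SupportMMScore (P : Profile α) (a : α) : ℕ :=
  ((((P.alts.erase a).filter fun b => 0 < Margin P b a).image fun b =>
    Support P b a).max).unbotD 0

/-- Support-based Minimax: alternatives with minimal support-based Minimax score. -/
def SupportMinimax (P : Profile α) : Finset α :=
  P.alts.filter fun a => ∀ b ∈ P.alts, SupportMMScore P a ≤ SupportMMScore P b

/-- The set of weak Condorcet winners in `P`. -/
def WeakCondorcetWinners (P : Profile α) : Finset α :=
  P.alts.filter fun a => ∀ x ∈ P.alts, 0 ≤ Margin P a x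

/-- The plurality score of `a`: the number of voters ranking `a` uniquely first. -/
def PluralityScore (P : Profile α) (a : α) : ℕ :=
  (P.voters.filter fun i => ∀ b ∈ P.alts, b ≠ a → P.rel i a b = true).card

/-- The Condorcet-Plurality voting method: the weak Condorcet winners if there
are any; otherwise the alternatives with maximal plurality score. -/
def CP (P : Profile α) : Finset α :=
  if (WeakCondorcetWinners P).Nonempty then WeakCondorcetWinners P
  else P.alts.filter fun a => ∀ b ∈ P.alts, PluralityScore P b ≤ PluralityScore P a

/-- The marginal Borda score of `a`: the sum of the margins of `a` over the
alternatives. -/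
def MarginalBorda (P : Profile α) (a : α) : ℤ :=
  ∑ b ∈ P.alts, Margin P a b

/-- Minimax MB: the Minimax winners with greatest marginal Borda score. -/
def MinimaxMB (P : Profile α) : Finset α :=
  (Minimax P).filter fun a => ∀ b ∈ Minimax P, MarginalBorda P b ≤ MarginalBorda P a

/-- `P` and `P'` have the same ordinal margin graph. -/
def SameOrdinalMarginGraph (P P' : Profile α) : Prop :=
  P.alts = P'.alts ∧
  (∀ a ∈ P.alts, ∀ b ∈ P.alts, (0 < Margin P a b ↔ 0 < Margin P' a b)) ∧
  (∀ a ∈ P.alts, ∀ b ∈ P.alts, ∀ c ∈ P.alts, ∀ d ∈ P.alts,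
    (Margin P c d ≤ Margin P a b ↔ Margin P' c d ≤ Margin P' a b))

/-- Ordinal margin invariance relative to a domain `D` of profiles. -/
def OrdinalMarginInvariance (D : Set (Profile α)) (F : Profile α → Finset α) : Prop :=
  ∀ P ∈ D, ∀ P' ∈ D, SameOrdinalMarginGraph P P' → F P = F P'

/-- `P` is uniquely-weighted: distinct pairs of distinct alternatives have
distinct margins. -/
def UniquelyWeighted (P : Profile α) : Prop :=
  ∀ a ∈ P.alts, ∀ b ∈ P.alts, ∀ c ∈ P.alts, ∀ d ∈ P.alts,
    a ≠ b → c ≠ d → (a, b) ≠ (c, d) → Margin P a b ≠ Margin P c d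

end MayMinimax

/-!
With two voters and two alternatives, anonymity and neutrality force a tie when the voters are
indifferent or opposed, and positive responsiveness then makes a Pareto-better alternative the
unique winner. With three alternatives, alternating positive responsiveness and immunity to
spoilers along two-voter profiles leads, whether or not `y` wins at `(x > z > y, z > x ~ y)`, to a
profile whose unique winner is not `z` although immunity to spoilers makes `z` win.
-/

namespace MayMinimax

variable {α : Type*}

namespace Profile

/-- Voter `i ∈ V` ranks the alternatives of `X` by `r i`; lower ranks are better. -/
def ofRanks (V : Finset ℕ) (X : Finset α) (r : ℕ → α → ℕ) : Profile α :=
  ⟨V, X, fun i a b => decide (r i a < r i b)⟩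

def duo (X : Finset α) (r₀ r₁ : α → ℕ) : Profile α :=
  ofRanks {0, 1} X fun i => if i = 0 then r₀ else r₁

theorem isSWO_ofRanks (V : Finset ℕ) (X : Finset α) (r : ℕ → α → ℕ) :
    IsSWO (ofRanks V X r) := fun _ _ =>
  ⟨fun _ _ _ _ h => by
    simp only [ofRanks, decide_eq_true_eq, decide_eq_false_iff_not] at h ⊢; omega,
  fun _ _ _ _ _ _ h₁ h₂ => by simp only [ofRanks, decide_eq_false_iff_not] at h₁ h₂ ⊢; omega⟩

theorem duo_mem_dom23 {X : Finset α} (hX : X.card = 2 ∨ X.card = 3) (r₀ r₁ : α → ℕ) :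
    duo X r₀ r₁ ∈ Dom23 α :=
  ⟨isSWO_ofRanks _ _ _, Finset.insert_nonempty _ _, hX⟩

end Profile

open Profile

/-- `ImproveFor` for a single ballot given by ranks: `s'` arises from `s` by raising `a`. -/
def RaisesOn (X : Finset α) (s s' : α → ℕ) (a : α) : Prop :=
  (∃ b ∈ X, b ≠ a ∧ (¬ s a < s b ∧ s' a < s' b ∨ s b < s a ∧ ¬ s' b < s' a)) ∧
  (∀ c ∈ X, c ≠ a → (s a < s c → s' a < s' c) ∧ (s' c < s' a → s c < s a)) ∧
  (∀ c ∈ X, c ≠ a → ∀ d ∈ X, d ≠ a → (s' c < s' d ↔ s c < s d))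

theorem improveFor_ofRanks {V : Finset ℕ} {X : Finset α} {r r' : ℕ → α → ℕ} {a : α} {i : ℕ}
    (hi : i ∈ V) (hother : ∀ j ∈ V, j ≠ i → r' j = r j) (h : RaisesOn X (r i) (r' i) a) :
    ImproveFor (ofRanks V X r) (ofRanks V X r') a := by
  obtain ⟨⟨b, hb, hba, hstrict⟩, hup, hrest⟩ := h
  refine ⟨rfl, rfl, i, hi, ⟨b, hb, hba, by simpa [ofRanks] using hstrict⟩, fun c hc hca => ?_,
    fun c hc hca d hd hda => by simpa [ofRanks] using hrest c hc hca d hd hda,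
    fun j hj hji _ _ _ _ => by simp [ofRanks, hother j hj hji]⟩
  simpa only [ofRanks, decide_eq_true_eq, decide_eq_false_iff_not, not_imp_not] using
    hup c hc hca

theorem improveFor_duo_left {X : Finset α} {r₀ r₀' r₁ : α → ℕ} {a : α}
    (h : RaisesOn X r₀ r₀' a) : ImproveFor (duo X r₀ r₁) (duo X r₀' r₁) a :=
  improveFor_ofRanks (i := 0) (by simp) (fun j _ hj => by simp [hj]) (by simpa using h)

theorem improveFor_duo_right {X : Finset α} {r₀ r₁ r₁' : α → ℕ} {a : α}
    (h : RaisesOn X r₁ r₁' a) : ImproveFor (duo X r₀ r₁) (duo X r₀ r₁') a := by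
  refine improveFor_ofRanks (i := 1) (by simp) (fun j hj hj₁ => ?_) (by simpa using h)
  obtain rfl : j = 0 := by simpa [hj₁] using hj
  rfl

section Axioms

variable {F : Profile α → Finset α}

theorem Anonymity.apply_eq_of_rel_eq (hA : Anonymity (Dom23 α) F) {P Q : Profile α}
    (hP : P ∈ Dom23 α) (hQ : Q ∈ Dom23 α) (hV : P.voters = Q.voters) (hX : P.alts = Q.alts)
    (hrel : ∀ i ∈ P.voters, ∀ a ∈ P.alts, ∀ b ∈ P.alts, P.rel i a b = Q.rel i a b) :
    F P = F Q :=
  hA P hP Q hQ hX ⟨Equiv.refl ℕ, by simpa using hV, hrel⟩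

theorem Anonymity.apply_duo_congr (hA : Anonymity (Dom23 α) F) {X : Finset α}
    (hX : X.card = 2 ∨ X.card = 3) {r₀ r₁ s₀ s₁ : α → ℕ}
    (h₀ : ∀ u ∈ X, ∀ v ∈ X, r₀ u < r₀ v ↔ s₀ u < s₀ v)
    (h₁ : ∀ u ∈ X, ∀ v ∈ X, r₁ u < r₁ v ↔ s₁ u < s₁ v) :
    F (duo X r₀ r₁) = F (duo X s₀ s₁) :=
  hA.apply_eq_of_rel_eq (duo_mem_dom23 hX _ _) (duo_mem_dom23 hX _ _) rfl rfl
    fun i _ u hu v hv => by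
      by_cases hi : i = 0 <;> simp [duo, ofRanks, hi, h₀ u hu v hv, h₁ u hu v hv]

theorem Anonymity.apply_duo_comm (hA : Anonymity (Dom23 α) F) {X : Finset α}
    (hX : X.card = 2 ∨ X.card = 3) (r₀ r₁ : α → ℕ) : F (duo X r₀ r₁) = F (duo X r₁ r₀) := by
  refine hA _ (duo_mem_dom23 hX _ _) _ (duo_mem_dom23 hX _ _) rfl ⟨Equiv.swap 0 1, ?_, ?_⟩
  · simp [duo, ofRanks, Finset.image_insert, Finset.pair_comm]
  · intro i hi u _ v _
    simp only [duo, ofRanks, Finset.mem_insert, Finset.mem_singleton] at hi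
    rcases hi with rfl | rfl <;> simp [duo, ofRanks]

theorem PositiveResponsiveness.apply_duo_raise_left (hPR : PositiveResponsiveness (Dom23 α) F)
    {X : Finset α} (hX : X.card = 2 ∨ X.card = 3) {r₀ r₀' r₁ : α → ℕ} {a : α}
    (ha : a ∈ F (duo X r₀ r₁)) (h : RaisesOn X r₀ r₀' a) : F (duo X r₀' r₁) = {a} :=
  hPR _ (duo_mem_dom23 hX _ _) _ (duo_mem_dom23 hX _ _) a ha (improveFor_duo_left h)

theorem PositiveResponsiveness.apply_duo_raise_right (hPR : PositiveResponsiveness (Dom23 α) F)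
    {X : Finset α} (hX : X.card = 2 ∨ X.card = 3) {r₀ r₁ r₁' : α → ℕ} {a : α}
    (ha : a ∈ F (duo X r₀ r₁)) (h : RaisesOn X r₁ r₁' a) : F (duo X r₀ r₁') = {a} :=
  hPR _ (duo_mem_dom23 hX _ _) _ (duo_mem_dom23 hX _ _) a ha (improveFor_duo_right h)

end Axioms

variable [DecidableEq α]

theorem Profile.restrict_rel_of_mem (P : Profile α) {Y : Finset α} (i : ℕ) {a b : α}
    (ha : a ∈ Y) (hb : b ∈ Y) : (P.restrict Y).rel i a b = P.rel i a b := by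
  simp [restrict, ha, hb]

theorem Profile.isSWO_restrict {P : Profile α} (hP : IsSWO P) {Y : Finset α}
    (hY : Y ⊆ P.alts) : IsSWO (P.restrict Y) := by
  intro i hi
  obtain ⟨hasymm, hntrans⟩ := hP i hi
  refine ⟨fun a (ha : a ∈ Y) b (hb : b ∈ Y) => ?_,
    fun a (ha : a ∈ Y) b (hb : b ∈ Y) c (hc : c ∈ Y) => ?_⟩
  · rw [restrict_rel_of_mem P i ha hb, restrict_rel_of_mem P i hb ha]
    exact hasymm a (hY ha) b (hY hb)
  · rw [restrict_rel_of_mem P i ha hb, restrict_rel_of_mem P i hb hc,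
      restrict_rel_of_mem P i ha hc]
    exact hntrans a (hY ha) b (hY hb) c (hY hc)

theorem restrict_mem_dom23 {P : Profile α} (hP : P ∈ Dom23 α) {Y : Finset α} (hY : Y ⊆ P.alts)
    (hcard : Y.card = 2 ∨ Y.card = 3) : P.restrict Y ∈ Dom23 α :=
  ⟨isSWO_restrict hP.1 hY, hP.2.1, hcard⟩

theorem raisesOn_pair_of_lt {a b : α} (hab : a ≠ b) {s : α → ℕ} (h : s a < s b) :
    RaisesOn {a, b} (fun _ => 0) s a := by
  refine ⟨⟨b, by simp, hab.symm, Or.inl ⟨lt_irrefl 0, h⟩⟩, ?_, ?_⟩ <;> simp [hab.symm, h.le]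

theorem image_swap_pair (a b : α) : ({a, b} : Finset α).image (Equiv.swap a b) = {a, b} := by
  simp [Finset.image_insert, Finset.pair_comm]

theorem eq_pair_of_image_swap_eq {s : Finset α} {a b : α} (hne : s.Nonempty)
    (hs : s ⊆ {a, b}) (hswap : s.image (Equiv.swap a b) = s) : s = {a, b} := by
  obtain ⟨c, hc⟩ := hne
  have hc' : Equiv.swap a b c ∈ s := hswap ▸ Finset.mem_image_of_mem _ hc
  refine hs.antisymm ?_
  obtain rfl | rfl : c = a ∨ c = b := by simpa using hs hc
  all_goals simp_all [Finset.insert_subset_iff]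

section Axioms

variable {F : Profile α → Finset α}

theorem Anonymity.apply_restrict_duo (hA : Anonymity (Dom23 α) F) {X Y : Finset α}
    (hYX : Y ⊆ X) (hY : Y.card = 2 ∨ Y.card = 3) (r₀ r₁ : α → ℕ) :
    F ((duo X r₀ r₁).restrict Y) = F (duo Y r₀ r₁) :=
  hA.apply_eq_of_rel_eq ⟨isSWO_restrict (isSWO_ofRanks _ _ _) hYX, Finset.insert_nonempty _ _, hY⟩
    (duo_mem_dom23 hY _ _) rfl rfl fun i _ _ ha _ hb => restrict_rel_of_mem _ i ha hb

theorem Neutrality.image_apply_duo (hN : Neutrality (Dom23 α) F) (τ : Equiv.Perm α)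
    {X : Finset α} (hX : X.card = 2 ∨ X.card = 3) (r₀ r₁ : α → ℕ) :
    (F (duo X r₀ r₁)).image τ = F (duo (X.image τ) (r₀ ∘ τ.symm) (r₁ ∘ τ.symm)) := by
  have hτX : (X.image τ).card = 2 ∨ (X.image τ).card = 3 := by
    rwa [Finset.card_image_of_injective _ τ.injective]
  refine hN _ (duo_mem_dom23 hX r₀ r₁) _ (duo_mem_dom23 hτX _ _) rfl τ rfl fun i _ u _ v _ => ?_
  by_cases hi : i = 0 <;> simp [duo, ofRanks, hi]

theorem Neutrality.apply_duo_pair_of_swap (hF : ∀ P ∈ Dom23 α, (F P).Nonempty ∧ F P ⊆ P.alts)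
    (hN : Neutrality (Dom23 α) F) {a b : α} (hab : a ≠ b) {r₀ r₁ : α → ℕ}
    (h : F (duo {a, b} (r₀ ∘ Equiv.swap a b) (r₁ ∘ Equiv.swap a b)) = F (duo {a, b} r₀ r₁)) :
    F (duo {a, b} r₀ r₁) = {a, b} := by
  have hX : ({a, b} : Finset α).card = 2 ∨ ({a, b} : Finset α).card = 3 :=
    Or.inl (Finset.card_pair hab)
  have hP := hF _ (duo_mem_dom23 hX r₀ r₁)
  refine eq_pair_of_image_swap_eq hP.1 hP.2 ?_
  rw [hN.image_apply_duo _ hX, image_swap_pair, Equiv.symm_swap, h]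

theorem ImmunityToSpoilers.mem_apply_duo (hItS : ImmunityToSpoilers (Dom23 α) F)
    (hA : Anonymity (Dom23 α) F) {X : Finset α} (hX : X.card = 3) {a b : α} (ha : a ∈ X)
    (hb : b ∈ X) (hab : a ≠ b) {r₀ r₁ : α → ℕ} (h_minus : a ∈ F (duo (X.erase b) r₀ r₁))
    (h_pair : F (duo {a, b} r₀ r₁) = {a}) (hb_F : b ∉ F (duo X r₀ r₁)) :
    a ∈ F (duo X r₀ r₁) := by
  have hP := duo_mem_dom23 (Or.inr hX) r₀ r₁
  have hXb : (X.erase b).card = 2 ∨ (X.erase b).card = 3 :=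
    Or.inl (by rw [Finset.card_erase_of_mem hb, hX])
  have hab' : ({a, b} : Finset α).card = 2 ∨ ({a, b} : Finset α).card = 3 :=
    Or.inl (Finset.card_pair hab)
  have hsub : {a, b} ⊆ X := by simp [Finset.insert_subset_iff, ha, hb]
  refine hItS _ hP a ha b hb (restrict_mem_dom23 hP (Finset.erase_subset b X) hXb)
    (restrict_mem_dom23 hP hsub hab') ?_ ?_ hb_F
  · rwa [minus, show (duo X r₀ r₁).alts = X from rfl,
      hA.apply_restrict_duo (Finset.erase_subset b X) hXb]
  · rwa [hA.apply_restrict_duo hsub hab']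

theorem apply_duo_pair_of_indifferent (hF : ∀ P ∈ Dom23 α, (F P).Nonempty ∧ F P ⊆ P.alts)
    (hA : Anonymity (Dom23 α) F) (hN : Neutrality (Dom23 α) F) {a b : α} (hab : a ≠ b)
    {r₀ r₁ : α → ℕ} (h₀ : r₀ a = r₀ b) (h₁ : r₁ a = r₁ b) :
    F (duo {a, b} r₀ r₁) = {a, b} :=
  hN.apply_duo_pair_of_swap hF hab <| hA.apply_duo_congr (Or.inl (Finset.card_pair hab))
    (by simp [Equiv.swap_apply_left, h₀]) (by simp [Equiv.swap_apply_left, h₁])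

theorem apply_duo_pair_of_opposed (hF : ∀ P ∈ Dom23 α, (F P).Nonempty ∧ F P ⊆ P.alts)
    (hA : Anonymity (Dom23 α) F) (hN : Neutrality (Dom23 α) F) {a b : α} (hab : a ≠ b)
    {r₀ r₁ : α → ℕ} (h₀ : r₀ a < r₀ b) (h₁ : r₁ b < r₁ a) :
    F (duo {a, b} r₀ r₁) = {a, b} := by
  have hX : ({a, b} : Finset α).card = 2 ∨ ({a, b} : Finset α).card = 3 :=
    Or.inl (Finset.card_pair hab)
  refine hN.apply_duo_pair_of_swap hF hab ?_
  rw [hA.apply_duo_comm hX r₀ r₁]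
  exact hA.apply_duo_congr hX (by simp [h₀, h₁, lt_asymm h₀, lt_asymm h₁])
    (by simp [h₀, h₁, lt_asymm h₀, lt_asymm h₁])

theorem apply_duo_pair_of_pareto (hF : ∀ P ∈ Dom23 α, (F P).Nonempty ∧ F P ⊆ P.alts)
    (hA : Anonymity (Dom23 α) F) (hN : Neutrality (Dom23 α) F)
    (hPR : PositiveResponsiveness (Dom23 α) F) {a b : α} (hab : a ≠ b) {r₀ r₁ : α → ℕ}
    (h₀ : r₀ a ≤ r₀ b) (h₁ : r₁ a ≤ r₁ b) (h : r₀ a < r₀ b ∨ r₁ a < r₁ b) :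
    F (duo {a, b} r₀ r₁) = {a} := by
  have hX : ({a, b} : Finset α).card = 2 ∨ ({a, b} : Finset α).card = 3 :=
    Or.inl (Finset.card_pair hab)
  wlog hlt₀ : r₀ a < r₀ b generalizing r₀ r₁
  · rw [hA.apply_duo_comm hX]
    exact this h₁ h₀ h.symm (h.resolve_left hlt₀)
  have h_indiff : ∀ s : α → ℕ, s a = s b → F (duo {a, b} r₀ s) = {a} := fun s hs =>
    hPR.apply_duo_raise_left hX
      (by simp [apply_duo_pair_of_indifferent hF hA hN hab (r₀ := fun _ => 0) rfl hs])
      (raisesOn_pair_of_lt hab hlt₀)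
  rcases h₁.lt_or_eq with hlt₁ | heq₁
  · exact hPR.apply_duo_raise_right hX (by simp [h_indiff (fun _ => 0) rfl])
      (raisesOn_pair_of_lt hab hlt₁)
  · exact h_indiff r₁ heq₁

end Axioms

/-- There is no voting method on the domain of profiles with two or three
alternatives satisfying anonymity, neutrality, (full) positive responsiveness,
and immunity to spoilers. -/
theorem no_method_with_positive_responsiveness_and_immunity {α : Type*} [DecidableEq α]
    (hX : ∃ x y z : α, x ≠ y ∧ x ≠ z ∧ y ≠ z) :
    ¬ ∃ F : Profile α → Finset α,
        (∀ P ∈ Dom23 α, (F P).Nonempty ∧ F P ⊆ P.alts) ∧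
        Anonymity (Dom23 α) F ∧
        Neutrality (Dom23 α) F ∧
        PositiveResponsiveness (Dom23 α) F ∧
        ImmunityToSpoilers (Dom23 α) F := by
  obtain ⟨x, y, z, hxy, hxz, hyz⟩ := hX
  rintro ⟨F, hF, hA, hN, hPR, hItS⟩
  have hne : x ≠ y ∧ y ≠ x ∧ x ≠ z ∧ z ≠ x ∧ y ≠ z ∧ z ≠ y :=
    ⟨hxy, hxy.symm, hxz, hxz.symm, hyz, hyz.symm⟩
  have hX : ({x, y, z} : Finset α).card = 3 := by simp [hne]
  have hXx : ({x, y, z} : Finset α).erase x = {z, y} := by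
    rw [Finset.erase_insert (by simp [hne]), Finset.pair_comm]
  have hXy : ({x, y, z} : Finset α).erase y = {x, z} := by
    rw [Finset.erase_insert_of_ne hxy, Finset.erase_insert (by simp [hne])]
  -- The ballot `l.idxOf` ranks by position in `l`; alternatives not in `l` tie at the bottom.
  by_cases hy₁ : y ∈ F (duo {x, y, z} [x, z].idxOf [z].idxOf)
  · have h₃ : F (duo {x, y, z} [x, z].idxOf [y, z].idxOf) = {y} :=
      hPR.apply_duo_raise_right (Or.inr hX) hy₁ (by simp [RaisesOn, hne])
    have hx₄ : x ∉ F (duo {x, y, z} [z].idxOf [y, z].idxOf) := fun hx₄ =>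
      hxy <| Finset.singleton_inj.1 <|
        (hPR.apply_duo_raise_left (Or.inr hX) hx₄ (by simp [RaisesOn, hne])).symm.trans h₃
    have hy₄ : y ∈ F (duo {x, y, z} [z].idxOf [y, z].idxOf) :=
      hItS.mem_apply_duo hA hX (by simp) (by simp) hxy.symm
        (by rw [hXx, apply_duo_pair_of_opposed hF hA hN hyz.symm] <;> simp [hne])
        (by apply apply_duo_pair_of_pareto hF hA hN hPR hxy.symm <;> simp [hne]) hx₄
    have h₅ : F (duo {x, y, z} [z, y].idxOf [y, z].idxOf) = {y} :=
      hPR.apply_duo_raise_left (Or.inr hX) hy₄ (by simp [RaisesOn, hne])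
    have hz₅ : z ∈ F (duo {x, y, z} [z, y].idxOf [y, z].idxOf) :=
      hItS.mem_apply_duo hA hX (by simp) (by simp) hxz.symm
        (by rw [hXx, apply_duo_pair_of_opposed hF hA hN hyz.symm] <;> simp [hne])
        (by apply apply_duo_pair_of_pareto hF hA hN hPR hxz.symm <;> simp [hne])
        (by simp [h₅, hne])
    simp [h₅, hne] at hz₅
  · have hx₁ : x ∈ F (duo {x, y, z} [x, z].idxOf [z].idxOf) :=
      hItS.mem_apply_duo hA hX (by simp) (by simp) hxy
        (by rw [hXy, apply_duo_pair_of_opposed hF hA hN hxz] <;> simp [hne])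
        (by apply apply_duo_pair_of_pareto hF hA hN hPR hxy <;> simp [hne]) hy₁
    have h₂ : F (duo {x, y, z} [x, z].idxOf [z, x].idxOf) = {x} :=
      hPR.apply_duo_raise_right (Or.inr hX) hx₁ (by simp [RaisesOn, hne])
    have hz₂ : z ∈ F (duo {x, y, z} [x, z].idxOf [z, x].idxOf) :=
      hItS.mem_apply_duo hA hX (by simp) (by simp) hyz.symm
        (by rw [hXy, apply_duo_pair_of_opposed hF hA hN hxz] <;> simp [hne])
        (by apply apply_duo_pair_of_pareto hF hA hN hPR hyz.symm <;> simp [hne])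
        (by simp [h₂, hne])
    simp [h₂, hne] at hz₂

end MayMinimax
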